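/- For every integer s ≥ 1, one has A_s = ∑_{n≥0} ((1/2)^{↑n} · (s/2)^{↑n} · ((s+1)/2)^{↑n}) / (2^{↑n} · (s+1)^{↑n} · n!), where A_s = ∑_{(m₁,…,m_s) ∈ ℕ^s} Cat_{m₁} ⋯ Cat_{m_s} · Cat_{m₁+⋯+m_s} · 16^{−(m₁+⋯+m_s)}, and both series converge. -/

import Mathlib

open Polynomial

/-- The star sum `A_s = ∑_{m ∈ ℕ^s} Cat_{m₁}⋯Cat_{m_s} · Cat_{m₁+⋯+m_s} · 16^{−(m₁+⋯+m_s)}`. -/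
noncomputable def starSum (s : ℕ) : ℝ :=
  ∑' m : Fin s → ℕ,
    (∏ i, (catalan (m i) : ℝ)) * (catalan (∑ i, m i) : ℝ) * ((16 : ℝ) ^ (∑ i, m i))⁻¹

/-!
Grouping the tuples `m` by `N = m₁ + ⋯ + m_s` turns `A_s` into
`∑_N [x^N] C(x)^s · Cat_N · 16^{-N}`, where `C = 1 + x C²` is the Catalan series.
The recurrence `C^{p+1} = C^p + x C^{p+2}` gives the ballot numbers
`[x^N] C^{p+1} = (p+1) (2N+p)! / (N! (N+p+1)!)`, and with the duplication formula
`(x)_{2n} = 4^n (x/2)_n ((x+1)/2)_n` the `N`-th grouped term is exactly the `N`-th term of the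
₃F₂ series. Since `Cat_N` and `[x^N] C^s` are `O(4^N / N)`, these terms are `O(1 / N²)`.
-/

open PowerSeries
open scoped ENNReal

theorem ascPochhammer_eval_two_mul {K : Type*} [Field K] [NeZero (2 : K)] (x : K) (n : ℕ) :
    (ascPochhammer K (2 * n)).eval x =
      4 ^ n * ((ascPochhammer K n).eval (x / 2) * (ascPochhammer K n).eval ((x + 1) / 2)) := by
  induction n with
  | zero => simp
  | succ n ih =>
    rw [show 2 * (n + 1) = 2 * n + 1 + 1 by ring, ascPochhammer_succ_eval,
      ascPochhammer_succ_eval, ih, ascPochhammer_succ_eval, ascPochhammer_succ_eval]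
    push_cast
    field_simp
    ring

theorem ascPochhammer_eval_half_mul {K : Type*} [Field K] [NeZero (2 : K)] (n : ℕ) :
    (ascPochhammer K n).eval (1 / 2) * (4 ^ n * n.factorial) = (2 * n).factorial := by
  have h := ascPochhammer_eval_two_mul (1 : K) n
  rw [show ((1 : K) + 1) / 2 = 1 by field_simp; norm_num, ascPochhammer_eval_one,
    ascPochhammer_eval_one] at h
  rw [h]
  ring

theorem coeff_zero_catalanSeries_pow (s : ℕ) : coeff 0 (catalanSeries ^ s) = 1 := by
  simp [catalanSeries_constantCoeff]

theorem coeff_succ_catalanSeries_pow_succ (s N : ℕ) :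
    coeff (N + 1) (catalanSeries ^ (s + 1)) =
      coeff (N + 1) (catalanSeries ^ s) + coeff N (catalanSeries ^ (s + 2)) := by
  have h : catalanSeries ^ (s + 1) =
      catalanSeries ^ s + catalanSeries ^ (s + 2) * PowerSeries.X := by
    calc catalanSeries ^ (s + 1)
        = catalanSeries ^ s * (catalanSeries ^ 2 * PowerSeries.X + 1) := by
          rw [catalanSeries_sq_mul_X_add_one, pow_succ]
      _ = _ := by ring
  rw [h, map_add, coeff_succ_mul_X]

theorem coeff_catalanSeries_pow_succ_mul_factorial (N p : ℕ) :
    coeff N (catalanSeries ^ (p + 1)) * (N.factorial * (N + p + 1).factorial) =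
      (p + 1) * (2 * N + p).factorial := by
  induction N generalizing p with
  | zero => simp [coeff_zero_catalanSeries_pow, Nat.factorial_succ]
  | succ N ih =>
    induction p with
    | zero =>
      have h := ih 1
      rw [coeff_succ_catalanSeries_pow_succ, pow_zero, PowerSeries.coeff_one,
        if_neg N.succ_ne_zero, zero_add]
      simp only [show 2 * (N + 1) + 0 = 2 * N + 1 + 1 by ring,
        show N + 1 + 0 + 1 = N + 1 + 1 by ring, show 0 + 2 = 1 + 1 by rfl,
        Nat.factorial_succ] at h ⊢
      zify at h ⊢
      linear_combination ((N : ℤ) + 1) * h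
    | succ p ihp =>
      have h := ih (p + 2)
      rw [coeff_succ_catalanSeries_pow_succ, show p + 1 + 2 = p + 2 + 1 by rfl]
      simp only [show 2 * (N + 1) + (p + 1) = 2 * N + p + 2 + 1 by ring,
        show 2 * (N + 1) + p = 2 * N + p + 2 by ring, show 2 * N + (p + 2) = 2 * N + p + 2 by ring,
        show N + 1 + (p + 1) + 1 = N + p + 2 + 1 by ring, show N + 1 + p + 1 = N + p + 2 by ring,
        show N + (p + 2) + 1 = N + p + 2 + 1 by ring, Nat.factorial_succ] at h ihp ⊢
      zify at h ihp ⊢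
      linear_combination ((N : ℤ) + p + 3) * ihp + ((N : ℤ) + 1) * h

theorem coeff_catalanSeries_pow_succ_mul (N p : ℕ) :
    coeff N (catalanSeries ^ (p + 1)) * (N + p + 1) = (p + 1) * (2 * N + p).choose N := by
  have h := coeff_catalanSeries_pow_succ_mul_factorial N p
  rw [← Nat.choose_mul_factorial_mul_factorial (show N ≤ 2 * N + p by omega),
    show 2 * N + p - N = N + p by omega, Nat.factorial_succ] at h
  apply Nat.eq_of_mul_eq_mul_right (by positivity : 0 < N.factorial * (N + p).factorial)
  linarith

theorem coeff_catalanSeries_pow_succ_mul_le (N p : ℕ) :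
    coeff N (catalanSeries ^ (p + 1)) * (N + 1) ≤ (p + 1) * 2 ^ p * 4 ^ N := calc
  _ ≤ coeff N (catalanSeries ^ (p + 1)) * (N + p + 1) := by gcongr; omega
  _ = (p + 1) * (2 * N + p).choose N := coeff_catalanSeries_pow_succ_mul N p
  _ ≤ (p + 1) * 2 ^ (2 * N + p) := by gcongr; exact Nat.choose_le_two_pow _ _
  _ = (p + 1) * 2 ^ p * 4 ^ N := by rw [pow_add, pow_mul]; ring

theorem summable_coeff_catalanSeries_pow_mul_catalan (p : ℕ) :
    Summable fun N : ℕ =>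
      ((coeff N (catalanSeries ^ (p + 1)) : ℕ) : ℝ) * catalan N * ((16 : ℝ) ^ N)⁻¹ := by
  have hinv : Summable fun N : ℕ => 1 / ((N : ℝ) + 1) ^ 2 := by
    simpa using (summable_nat_add_iff 1).2 (Real.summable_one_div_nat_pow.2 one_lt_two)
  refine Summable.of_nonneg_of_le (fun N => by positivity) (fun N => ?_)
    (hinv.mul_left (((p : ℝ) + 1) * 2 ^ p))
  have hK : ((coeff N (catalanSeries ^ (p + 1)) : ℕ) : ℝ) * (N + 1) ≤
      (p + 1) * 2 ^ p * 4 ^ N := by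
    exact_mod_cast coeff_catalanSeries_pow_succ_mul_le N p
  have hC : (catalan N : ℝ) * (N + 1) ≤ 4 ^ N := by
    exact_mod_cast (mul_comm (catalan N) _ ▸ succ_mul_catalan_eq_centralBinom N).trans_le
      (Nat.centralBinom_le_four_pow N)
  rw [mul_one_div, le_div_iff₀ (by positivity), show (16 : ℝ) = 4 * 4 by norm_num, mul_pow]
  calc _ = ((coeff N (catalanSeries ^ (p + 1)) : ℕ) * ((N : ℝ) + 1)) * (catalan N * (N + 1)) /
        (4 ^ N * 4 ^ N) := by ring
    _ ≤ ((p + 1) * 2 ^ p * 4 ^ N) * 4 ^ N / (4 ^ N * 4 ^ N) := by gcongr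
    _ = _ := by field_simp

noncomputable def hypergeomTerm (s n : ℕ) : ℝ :=
  (ascPochhammer ℝ n).eval (1 / 2 : ℝ) * (ascPochhammer ℝ n).eval ((s : ℝ) / 2) *
    (ascPochhammer ℝ n).eval (((s : ℝ) + 1) / 2) /
    ((ascPochhammer ℝ n).eval (2 : ℝ) * (ascPochhammer ℝ n).eval ((s : ℝ) + 1) *
      (n.factorial : ℝ))

theorem hypergeomTerm_eq (p n : ℕ) :
    hypergeomTerm (p + 1) n =
      (coeff n (catalanSeries ^ (p + 1)) : ℕ) * catalan n * ((16 : ℝ) ^ n)⁻¹ := by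
  have hK : ((coeff n (catalanSeries ^ (p + 1)) : ℕ) : ℝ) =
      (p + 1) * (2 * n + p).factorial / (n.factorial * (n + p + 1).factorial) := by
    rw [eq_div_iff (by positivity)]
    exact_mod_cast coeff_catalanSeries_pow_succ_mul_factorial n p
  have hC : (catalan n : ℝ) = (2 * n).factorial / (n.factorial * (n + 1).factorial) := by
    have h := coeff_catalanSeries_pow_succ_mul_factorial n 0
    rw [pow_one, catalanSeries_coeff] at h
    rw [eq_div_iff (by positivity)]
    simpa using congrArg (Nat.cast : ℕ → ℝ) h
  have hhalf : (ascPochhammer ℝ n).eval (1 / 2) = (2 * n).factorial / (4 ^ n * n.factorial) := by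
    rw [eq_div_iff (by positivity), ascPochhammer_eval_half_mul]
  have hpair : (ascPochhammer ℝ n).eval (((p + 1 : ℕ) : ℝ) / 2) *
      (ascPochhammer ℝ n).eval ((((p + 1 : ℕ) : ℝ) + 1) / 2) =
      (2 * n + p).factorial / (p.factorial * 4 ^ n) := by
    rw [eq_div_iff (by positivity), show 2 * n + p = p + 2 * n by ring,
      ← factorial_mul_ascPochhammer, ascPochhammer_eval_two_mul]
    push_cast
    ring
  have htwo : (ascPochhammer ℝ n).eval 2 = (n + 1).factorial := by
    simpa [add_comm, one_add_one_eq_two] using factorial_mul_ascPochhammer ℝ 1 n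
  have hsucc : (ascPochhammer ℝ n).eval (((p + 1 : ℕ) : ℝ) + 1) =
      (n + p + 1).factorial / (p + 1).factorial := by
    rw [eq_div_iff (by positivity), mul_comm, factorial_mul_ascPochhammer,
      show p + 1 + n = n + p + 1 by ring]
  rw [hypergeomTerm, mul_assoc _ (eval _ _), hpair, hhalf, htwo, hsucc, hK, hC,
    show (16 : ℝ) = 4 * 4 by norm_num, mul_pow, Nat.factorial_succ p]
  push_cast
  field_simp

theorem tsum_prod_coeff_mul_eq_tsum_coeff_pow (φ : PowerSeries ℕ) (w : ℕ → ℝ≥0∞)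
    (s : ℕ) :
    ∑' m : Fin s → ℕ, (∏ i, ((coeff (m i) φ : ℕ) : ℝ≥0∞)) * w (∑ i, m i) =
      ∑' N, ((coeff N (φ ^ s) : ℕ) : ℝ≥0∞) * w N := by
  rw [← Finsupp.equivFunOnFinite.tsum_eq, ← ENNReal.tsum_fiberwise _ fun l => ∑ i, l i]
  simp only [Finsupp.equivFunOnFinite_apply]
  refine tsum_congr fun N => ?_
  have hfiber : (fun l : Fin s →₀ ℕ => ∑ i, l i) ⁻¹' {N} =
      ↑(Finset.finsuppAntidiag (Finset.univ : Finset (Fin s)) N) := by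
    ext l
    simp
  have hpow : φ ^ s = ∏ _i : Fin s, φ := by simp
  rw [hfiber, Finset.tsum_subtype' (Finset.finsuppAntidiag Finset.univ N)
      fun l => (∏ i, ((coeff (l i) φ : ℕ) : ℝ≥0∞)) * w (∑ i, l i),
    hpow, coeff_prod, Nat.cast_sum, Finset.sum_mul]
  refine Finset.sum_congr rfl fun l hl => ?_
  rw [(Finset.mem_finsuppAntidiag.1 hl).1, Nat.cast_prod]

noncomputable def starTerm (s : ℕ) (m : Fin s → ℕ) : ℝ :=
  (∏ i, (catalan (m i) : ℝ)) * catalan (∑ i, m i) * ((16 : ℝ) ^ (∑ i, m i))⁻¹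

theorem tsum_ofReal_starTerm (s : ℕ) :
    ∑' m, ENNReal.ofReal (starTerm s m) = ∑' N, ENNReal.ofReal
      (((coeff N (catalanSeries ^ s) : ℕ) : ℝ) * catalan N * ((16 : ℝ) ^ N)⁻¹) := by
  have h := tsum_prod_coeff_mul_eq_tsum_coeff_pow catalanSeries
    (fun N => ENNReal.ofReal (catalan N * ((16 : ℝ) ^ N)⁻¹)) s
  simp only [catalanSeries_coeff] at h
  refine (tsum_congr fun m => ?_).trans (h.trans (tsum_congr fun N => ?_))
  · rw [starTerm, mul_assoc, ENNReal.ofReal_mul (by positivity),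
      ENNReal.ofReal_prod_of_nonneg fun _ _ => by positivity]
    simp
  · rw [mul_assoc, ← ENNReal.ofReal_natCast, ← ENNReal.ofReal_mul (by positivity)]

theorem summable_and_tsum_eq_of_tsum_ofReal_eq {α β : Type*} {f : α → ℝ} {g : β → ℝ}
    (hf : ∀ a, 0 ≤ f a) (hg : ∀ b, 0 ≤ g b) (hgs : Summable g)
    (h : ∑' a, ENNReal.ofReal (f a) = ∑' b, ENNReal.ofReal (g b)) :
    Summable f ∧ ∑' a, f a = ∑' b, g b := by
  rw [← ENNReal.ofReal_tsum_of_nonneg hg hgs] at h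
  have hfin : ∑' a, ENNReal.ofReal (f a) ≠ ∞ := h ▸ ENNReal.ofReal_ne_top
  have hf' : ∀ a, (ENNReal.ofReal (f a)).toReal = f a := fun a => ENNReal.toReal_ofReal (hf a)
  refine ⟨by simpa only [hf'] using ENNReal.summable_toReal hfin, ?_⟩
  rw [← tsum_congr hf', ← ENNReal.tsum_toReal_eq fun _ => ENNReal.ofReal_ne_top, h,
    ENNReal.toReal_ofReal (tsum_nonneg hg)]

/-- For `s ≥ 1`, `A_s = ₃F₂(1/2, s/2, (s+1)/2; 2, s+1; 1)`, both series converging. -/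
theorem stmt_13 (s : ℕ) (hs : 1 ≤ s) :
    Summable (fun m : Fin s → ℕ =>
      (∏ i, (catalan (m i) : ℝ)) * (catalan (∑ i, m i) : ℝ) * ((16 : ℝ) ^ (∑ i, m i))⁻¹) ∧
    Summable (fun n : ℕ =>
      (ascPochhammer ℝ n).eval (1 / 2 : ℝ) * (ascPochhammer ℝ n).eval ((s : ℝ) / 2) *
        (ascPochhammer ℝ n).eval (((s : ℝ) + 1) / 2) /
        ((ascPochhammer ℝ n).eval (2 : ℝ) * (ascPochhammer ℝ n).eval ((s : ℝ) + 1) *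
          (n.factorial : ℝ))) ∧
    starSum s =
      ∑' n : ℕ,
        (ascPochhammer ℝ n).eval (1 / 2 : ℝ) * (ascPochhammer ℝ n).eval ((s : ℝ) / 2) *
          (ascPochhammer ℝ n).eval (((s : ℝ) + 1) / 2) /
          ((ascPochhammer ℝ n).eval (2 : ℝ) * (ascPochhammer ℝ n).eval ((s : ℝ) + 1) *
            (n.factorial : ℝ)) := by
  obtain ⟨p, rfl⟩ : ∃ p, s = p + 1 := ⟨s - 1, by omega⟩
  have hterm : hypergeomTerm (p + 1) = fun N =>
      ((coeff N (catalanSeries ^ (p + 1)) : ℕ) : ℝ) * catalan N * ((16 : ℝ) ^ N)⁻¹ :=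
    funext (hypergeomTerm_eq p)
  have hsum := summable_coeff_catalanSeries_pow_mul_catalan p
  obtain ⟨hstar, htsum⟩ := summable_and_tsum_eq_of_tsum_ofReal_eq
    (fun m => by unfold starTerm; positivity) (fun N => by positivity) hsum
    (tsum_ofReal_starTerm (p + 1))
  show _ ∧ Summable (hypergeomTerm (p + 1)) ∧ starSum (p + 1) = ∑' n, hypergeomTerm (p + 1) n
  rw [hterm]
  exact ⟨hstar, hsum, htsum⟩
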